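/- Let M be a circular-ones matrix with a fixed circular-ones ordering, R a row of M with at least two 1's and at least one 0, and T the PC tree of M with the induced cyclic orders. Root T at a leaf corresponding to a column where R has a 0, and let u be the least common ancestor in T of the leaves where R has 1's. If the leaf-descendant set X of every child of u does not strongly overlap R, then R (the set of columns where R has 1) is a union of leaf-descendant sets of children of u. -/
import Mathlib


/-- `X` and `Y` strongly overlap (in universe `L`, the whole type). -/
def StronglyOverlap {L : Type*} (X Y : Set L) : Prop :=
  (X ∩ Y).Nonempty ∧ (X \ Y).Nonempty ∧ (Y \ X).Nonempty ∧ (X ∪ Y)ᶜ.Nonempty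

/-- Formalizable core of the projection lemma.  `L` is the set of leaves
(columns), `R` the set of 1-columns of a row, `D c` the leaf-descendant set of
the child `c` of the node `u`, and `r0` the root, a leaf neither in `R` nor
below `u`.  The hypotheses that `u` is the least common ancestor of the
1-columns of `R` are: `R` is contained in the union of the `D c`, but in no
single `D c`.  If no leaf-descendant set `D c` strongly overlaps `R`, then `R`
is a union of leaf-descendant sets of children of `u`. -/
theorem row_is_union_of_child_descendant_sets {L C : Type*}
    (R : Set L) (hRne : R.Nonempty) (D : C → Set L)
    (r0 : L) (hr0R : r0 ∉ R) (hr0D : ∀ c, r0 ∉ D c)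
    (hsub : R ⊆ ⋃ c, D c) (hlca : ¬ ∃ c, R ⊆ D c)
    (hno : ∀ c, ¬ StronglyOverlap (D c) R) :
    ∃ S : Set C, R = ⋃ c ∈ S, D c := by
  refine ⟨{c | (D c ∩ R).Nonempty}, ?_⟩
  apply Set.Subset.antisymm
  · intro x hx
    obtain ⟨c, hc⟩ := Set.mem_iUnion.mp (hsub hx)
    exact Set.mem_iUnion₂.mpr ⟨c, ⟨x, hc, hx⟩, hc⟩
  · intro x hx
    obtain ⟨c, hc, hxc⟩ := Set.mem_iUnion₂.mp hx
    by_contra hxR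
    exact hno c ⟨hc, ⟨x, hxc, hxR⟩,
      (Set.not_subset.mp fun h => hlca ⟨c, h⟩).imp fun y ⟨hy, hyc⟩ => ⟨hy, hyc⟩,
      ⟨r0, fun h => h.elim (hr0D c) hr0R⟩⟩
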